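/- Combining the WMMSE identities: for any H ∈ ℂ^{L×M} and W ∈ ℂ^{M×K}, log det(I_L + H W W^H H^H) = max over Hermitian positive definite Q ∈ ℂ^{K×K} and P ∈ ℂ^{L×K} of [log det(Q) − Tr(Q E(P, W)) + K], where E(P, W) = (I − P^H H W)(I − P^H H W)^H + P^H P. -/

import Mathlib

/-!
Write `G = H W` and `T = 1 + Gᴴ G`. Completing the square in `P` gives
`E(P) = T⁻¹ + (P - G T⁻¹)ᴴ (1 + G Gᴴ) (P - G T⁻¹) ≥ T⁻¹`, so for positive definite `Q` the
objective is at most `log det Q - tr (Q T⁻¹) + K`. Applying `log λ ≤ λ - 1` to the eigenvalues of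
`T^{-1/2} Q T^{-1/2}` bounds this by `log det T`, which equals `log det (1 + G Gᴴ)` by Sylvester's
determinant identity; equality holds at `P = G T⁻¹`, `Q = T`.
-/

open Matrix ComplexOrder
open scoped MatrixOrder

namespace Matrix

variable {𝕜 n : Type*} [RCLike 𝕜] [Fintype n] [DecidableEq n]

lemma PosDef.re_det_pos {A : Matrix n n 𝕜} (hA : A.PosDef) : 0 < RCLike.re A.det :=
  (RCLike.pos_iff.mp hA.det_pos).1

lemma PosDef.re_det_mul {A : Matrix n n 𝕜} (hA : A.PosDef) (B : Matrix n n 𝕜) :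
    RCLike.re (A * B).det = RCLike.re A.det * RCLike.re B.det := by
  simp [det_mul, RCLike.mul_re, (RCLike.pos_iff.mp hA.det_pos).2]

lemma PosDef.log_re_det_le_re_trace_sub_card {A : Matrix n n 𝕜} (hA : A.PosDef) :
    Real.log (RCLike.re A.det) ≤ RCLike.re A.trace - Fintype.card n := by
  have hdet : RCLike.re A.det = ∏ i, hA.1.eigenvalues i := by
    rw [hA.1.det_eq_prod_eigenvalues, ← RCLike.ofReal_prod, RCLike.ofReal_re]
  have htr : RCLike.re A.trace = ∑ i, hA.1.eigenvalues i := by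
    rw [hA.1.trace_eq_sum_eigenvalues, ← RCLike.ofReal_sum, RCLike.ofReal_re]
  rw [hdet, htr, Real.log_prod fun i _ => (hA.eigenvalues_pos i).ne']
  calc ∑ i, Real.log (hA.1.eigenvalues i) ≤ ∑ i, (hA.1.eigenvalues i - 1) :=
        Finset.sum_le_sum fun i _ => Real.log_le_sub_one_of_pos (hA.eigenvalues_pos i)
    _ = ∑ i, hA.1.eigenvalues i - Fintype.card n := by simp [Finset.sum_sub_distrib]

lemma PosSemidef.re_trace_mul_nonneg {A B : Matrix n n 𝕜} (hA : A.PosSemidef)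
    (hB : B.PosSemidef) : 0 ≤ RCLike.re (A * B).trace := by
  have hsqrt : CFC.sqrt A * CFC.sqrt A = A := CFC.sqrt_mul_sqrt_self A hA.nonneg
  have hherm : (CFC.sqrt A)ᴴ = CFC.sqrt A := (CFC.sqrt_nonneg A).posSemidef.isHermitian
  have hconj : (CFC.sqrt A * B * CFC.sqrt A).PosSemidef := by
    simpa only [hherm] using hB.mul_mul_conjTranspose_same (CFC.sqrt A)
  rw [← hsqrt, ← trace_mul_cycle]
  exact (RCLike.nonneg_iff.mp hconj.trace_nonneg).1

lemma PosDef.log_re_det_sub_re_trace_mul_inv_le {Q T : Matrix n n 𝕜} (hQ : Q.PosDef)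
    (hT : T.PosDef) :
    Real.log (RCLike.re Q.det) - RCLike.re (Q * T⁻¹).trace + Fintype.card n
      ≤ Real.log (RCLike.re T.det) := by
  set r := CFC.sqrt T⁻¹
  have hr : r * r = T⁻¹ := CFC.sqrt_mul_sqrt_self _ hT.inv.posSemidef.nonneg
  have hrH : star r = r := (CFC.sqrt_nonneg T⁻¹).posSemidef.isHermitian
  have hrU : IsUnit r :=
    (CFC.isUnit_sqrt_iff _ hT.inv.posSemidef.nonneg).mpr hT.inv.isUnit
  have hA : (r * Q * r).PosDef := by
    simpa only [hrH] using (IsUnit.posDef_star_left_conjugate_iff hrU).mpr hQ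
  have hdet : Q.det = (r * Q * r * T).det := by
    have hrrT : (r * r * T).det = 1 := by
      rw [hr, nonsing_inv_mul T ((isUnit_iff_isUnit_det T).mp hT.isUnit), det_one]
    simp only [det_mul] at hrrT ⊢
    linear_combination (-Q.det) * hrrT
  have htr : (r * Q * r).trace = (Q * T⁻¹).trace := by
    rw [← hr, trace_mul_cycle, trace_mul_comm]
  have hlog := hA.log_re_det_le_re_trace_sub_card
  rw [hdet, hA.re_det_mul, Real.log_mul hA.re_det_pos.ne' hT.re_det_pos.ne']
  rw [htr] at hlog
  linarith

variable {m : Type*} [Fintype m]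

lemma PosDef.one_add_conjTranspose_mul_self (G : Matrix m n 𝕜) : (1 + Gᴴ * G).PosDef :=
  PosDef.one.add_posSemidef (posSemidef_conjTranspose_mul_self G)

variable [DecidableEq m]

/-- The error matrix `E(P, W)` of the paper, in terms of the effective channel `G = H W`. -/
def mseMatrix (G P : Matrix m n 𝕜) : Matrix n n 𝕜 :=
  (1 - Pᴴ * G) * (1 - Pᴴ * G)ᴴ + Pᴴ * P

/-- The minimiser `G (1 + Gᴴ G)⁻¹` is the paper's MMSE receiver `(1 + G Gᴴ)⁻¹ G`
(push-through identity). -/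
lemma mseMatrix_eq_inv_add (G P : Matrix m n 𝕜) :
    mseMatrix G P = (1 + Gᴴ * G)⁻¹
      + (P - G * (1 + Gᴴ * G)⁻¹)ᴴ * (1 + G * Gᴴ) * (P - G * (1 + Gᴴ * G)⁻¹) := by
  set T := 1 + Gᴴ * G with hT_def
  have hT : T.PosDef := PosDef.one_add_conjTranspose_mul_self G
  have hTdet : IsUnit T.det := (isUnit_iff_isUnit_det T).mp hT.isUnit
  have hTinvH : (T⁻¹)ᴴ = T⁻¹ := hT.inv.isHermitian
  have hpush : (1 + G * Gᴴ) * G = G * T := by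
    simp only [hT_def, Matrix.add_mul, Matrix.mul_add, Matrix.one_mul, Matrix.mul_one,
      Matrix.mul_assoc]
  have hSP : (1 + G * Gᴴ) * (P - G * T⁻¹) = (1 + G * Gᴴ) * P - G := by
    rw [Matrix.mul_sub, ← Matrix.mul_assoc, hpush, Matrix.mul_assoc, mul_nonsing_inv T hTdet,
      Matrix.mul_one]
  have hGS : T⁻¹ * Gᴴ * (1 + G * Gᴴ) = Gᴴ := by
    have := congrArg conjTranspose hpush
    simp only [conjTranspose_mul, conjTranspose_add, conjTranspose_one, conjTranspose_conjTranspose,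
      hT.isHermitian.eq] at this
    rw [Matrix.mul_assoc, this, ← Matrix.mul_assoc, nonsing_inv_mul T hTdet, Matrix.one_mul]
  have hTGG : T⁻¹ * (Gᴴ * G) = 1 - T⁻¹ := by
    rw [show Gᴴ * G = T - 1 by rw [hT_def]; abel, Matrix.mul_sub, nonsing_inv_mul T hTdet,
      Matrix.mul_one]
  calc mseMatrix G P
      = 1 - Pᴴ * G - Gᴴ * P + Pᴴ * ((1 + G * Gᴴ) * P) := by
        simp only [mseMatrix, conjTranspose_sub, conjTranspose_mul, conjTranspose_one,
          conjTranspose_conjTranspose, Matrix.sub_mul, Matrix.mul_sub, Matrix.add_mul,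
          Matrix.mul_add, Matrix.one_mul, Matrix.mul_one, Matrix.mul_assoc]
        abel
    _ = T⁻¹ + (Pᴴ - T⁻¹ * Gᴴ) * ((1 + G * Gᴴ) * P - G) := by
        rw [Matrix.sub_mul, Matrix.mul_sub, Matrix.mul_sub, ← Matrix.mul_assoc (T⁻¹ * Gᴴ), hGS,
          Matrix.mul_assoc T⁻¹, hTGG]
        abel
    _ = T⁻¹ + (P - G * T⁻¹)ᴴ * (1 + G * Gᴴ) * (P - G * T⁻¹) := by
        rw [Matrix.mul_assoc _ (1 + G * Gᴴ), hSP, conjTranspose_sub, conjTranspose_mul, hTinvH]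

lemma mseMatrix_mmse (G : Matrix m n 𝕜) :
    mseMatrix G (G * (1 + Gᴴ * G)⁻¹) = (1 + Gᴴ * G)⁻¹ := by
  simp [mseMatrix_eq_inv_add]

lemma log_re_det_sub_re_trace_mul_mseMatrix_le {Q : Matrix n n 𝕜} (hQ : Q.PosDef)
    (G P : Matrix m n 𝕜) :
    Real.log (RCLike.re Q.det) - RCLike.re (Q * mseMatrix G P).trace + Fintype.card n
      ≤ Real.log (RCLike.re (1 + Gᴴ * G).det) := by
  have hD : ((P - G * (1 + Gᴴ * G)⁻¹)ᴴ * (1 + G * Gᴴ) * (P - G * (1 + Gᴴ * G)⁻¹)).PosSemidef :=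
    (PosSemidef.one.add (posSemidef_self_mul_conjTranspose G)).conjTranspose_mul_mul_same _
  have hQD := hQ.posSemidef.re_trace_mul_nonneg hD
  rw [mseMatrix_eq_inv_add, Matrix.mul_add, trace_add, map_add]
  linarith [hQ.log_re_det_sub_re_trace_mul_inv_le (PosDef.one_add_conjTranspose_mul_self G)]

end Matrix

theorem stmt_4 (L M K : ℕ) (H : Matrix (Fin L) (Fin M) ℂ) (W : Matrix (Fin M) (Fin K) ℂ) :
    IsGreatest {x : ℝ | ∃ (Q : Matrix (Fin K) (Fin K) ℂ) (P : Matrix (Fin L) (Fin K) ℂ),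
        Q.PosDef ∧ x = Real.log Q.det.re
          - (Q * ((1 - Pᴴ * H * W) * (1 - Pᴴ * H * W)ᴴ + Pᴴ * P)).trace.re + K}
      (Real.log (1 + H * W * Wᴴ * Hᴴ).det.re) := by
  set G := H * W
  have hE (P : Matrix (Fin L) (Fin K) ℂ) :
      (1 - Pᴴ * H * W) * (1 - Pᴴ * H * W)ᴴ + Pᴴ * P = mseMatrix G P := by
    simp only [mseMatrix, G, Matrix.mul_assoc]
  have hdet : (1 + G * Wᴴ * Hᴴ).det = (1 + Gᴴ * G).det := by
    rw [Matrix.mul_assoc, ← conjTranspose_mul, det_one_add_mul_comm]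
  have hT := PosDef.one_add_conjTranspose_mul_self G
  simp only [hE, hdet]
  refine ⟨⟨1 + Gᴴ * G, G * (1 + Gᴴ * G)⁻¹, hT, ?_⟩, ?_⟩
  · rw [mseMatrix_mmse, mul_nonsing_inv _ ((isUnit_iff_isUnit_det _).mp hT.isUnit), trace_one]
    simp
  · rintro x ⟨Q, P, hQ, rfl⟩
    simpa using log_re_det_sub_re_trace_mul_mseMatrix_le hQ G P
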